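/- Let 𝒫 be a partial clustering with OPT(𝒫) and let (P'_i)_{i∈[k]} be an extension of 𝒫 with associated centers (c'_i) and value at most (1 + t)·OPT(𝒫); set R'_i = P'_i ∩ R. Fix i, j ∈ [k] with |I_i| ≥ Δ + 1 and I_j = ∅ (so that c'_j = c(P'_j)), and let Z_{i,j} ⊆ I_i with Z_{i,j} ≠ I_i be compatible with (P'_i). Let i_{j,min} ∈ I_i − Z_{i,j} minimize d^{e}(u_i, c'_j) over e ∈ I_i − Z_{i,j}, let r_1,…,r_Δ be Δ coordinates of I_i − {i_{j,min}} achieving the Δ largest values of d^{e}(u_i, c'_j) over e ∈ I_i − {i_{j,min}}, set I_{i,j} = I_i − {r_1,…,r_Δ}, and set d^j = d^{I_{i,j}}(u_i, c'_j). For every constant c > 0, let B_j = {x ∈ FD(R, I_i) : d(x, u_i) ≤ d^j/4}. Then either |P'_j − B_j| ≥ c·|FD(R'_i, I_i) − B_j|, or f^{I_{i,j}}_2(P'_j, u_i) − f^{I_{i,j}}_2(P'_j, c'_j) ≤ 16c(1 + t)·OPT(𝒫). -/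

import Mathlib

open Finset

namespace KMD

/-- A point in `ℍ^d`: each coordinate is either a real number or missing (`none`). -/
abbrev HPt (d : ℕ) := Fin d → Option ℝ

variable {d : ℕ}

/-- The domain of a point: the set of coordinates where it is specified. -/
noncomputable def Dom (x : HPt d) : Finset (Fin d) := Finset.univ.filter fun i => x i ≠ none

/-- The number of missing coordinates of a point. -/
noncomputable def numMissing (x : HPt d) : ℕ := (Finset.univ.filter fun i => x i = none).card

/-- A `Δ`-point: at most `Δ` coordinates are missing. -/
def IsDeltaPt (Δ : ℕ) (x : HPt d) : Prop := numMissing x ≤ Δ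

/-- `(a - b)^2`, with the convention that it is `0` when either entry is missing. -/
def coordSq : Option ℝ → Option ℝ → ℝ
  | some a, some b => (a - b) ^ 2
  | _, _ => 0

/-- `d^I(x,y)`. -/
noncomputable def dI (I : Finset (Fin d)) (x y : HPt d) : ℝ :=
  Real.sqrt (∑ i ∈ I, coordSq (x i) (y i))

/-- `d(x,y) = d^{[d]}(x,y)`. -/
noncomputable def dH (x y : HPt d) : ℝ := dI Finset.univ x y

/-- `PD(S, I)`: points of `S` partially defined on `I`. -/
noncomputable def PD (S : Finset (HPt d)) (I : Finset (Fin d)) : Finset (HPt d) :=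
  S.filter fun x => (Dom x ∩ I).Nonempty

/-- `FD(S, I)`: points of `S` fully defined on `I`. -/
noncomputable def FD (S : Finset (HPt d)) (I : Finset (Fin d)) : Finset (HPt d) :=
  S.filter fun x => Dom x ⊆ I

/-- The mean `c^I(P)` of `P` on the coordinates of `I` (unspecified outside `I`). -/
noncomputable def cI (I : Finset (Fin d)) (P : Finset (HPt d)) : HPt d := fun i =>
  if i ∈ I ∧ (PD P {i}).Nonempty then
    some ((∑ x ∈ PD P {i}, (x i).getD 0) / (PD P {i}).card)
  else none

/-- `c(P) = c^{[d]}(P)`. -/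
noncomputable def cP (P : Finset (HPt d)) : HPt d := cI Finset.univ P

/-- `f^I_2(X, y) = Σ_{x ∈ X} d^I(x,y)^2`. -/
noncomputable def f2I (I : Finset (Fin d)) (X : Finset (HPt d)) (y : HPt d) : ℝ :=
  ∑ x ∈ X, dI I x y ^ 2

/-- `f_2 = f^{[d]}_2`. -/
noncomputable def f2 (X : Finset (HPt d)) (y : HPt d) : ℝ := f2I Finset.univ X y

/-- A partial clustering of the instance `P` of `Δ`-points, with `k` clusters. -/
structure PartialClustering (d Δ k : ℕ) (P : Finset (HPt d)) where
  n : Fin k → ℕ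
  H : Fin k → Finset (HPt d)
  I : Fin k → Finset (Fin d)
  u : Fin k → HPt d
  H_sub : ∀ i, H i ⊆ P
  n_le : ∀ i, n i ≤ Δ + 1
  dom_u : ∀ i, Dom (u i) = I i
  I_card : ∀ i, 0 < n i → d - Δ + (n i - 1) ≤ (I i).card
  I_empty : ∀ i, n i = 0 → I i = ∅
  H_empty : ∀ i, n i = 0 → H i = ∅

variable {Δ k : ℕ} {P : Finset (HPt d)}

/-- `R = P − ∪_i H_i`: the points not yet assigned to a cluster. -/
noncomputable def Rset (pc : PartialClustering d Δ k P) : Finset (HPt d) :=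
  P \ Finset.univ.biUnion pc.H

/-- An extension of a partial clustering: a partition `(Q i)` of `P` with `H i ⊆ Q i`. -/
def IsExtension (pc : PartialClustering d Δ k P) (Q : Fin k → Finset (HPt d)) : Prop :=
  (∀ i, pc.H i ⊆ Q i) ∧ (∀ i, Q i ⊆ P) ∧
    (∀ i j, i ≠ j → Disjoint (Q i) (Q j)) ∧ ∀ x ∈ P, ∃ i, x ∈ Q i

/-- The centers associated with an extension: `c'_i` agrees with `u i` on `I i`
and with the mean of `Q i` outside `I i`. -/
noncomputable def centers (pc : PartialClustering d Δ k P)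
    (Q : Fin k → Finset (HPt d)) (i : Fin k) : HPt d :=
  fun r => if r ∈ pc.I i then pc.u i r else cP (Q i) r

/-- The value of an extension. -/
noncomputable def extVal (pc : PartialClustering d Δ k P)
    (Q : Fin k → Finset (HPt d)) : ℝ :=
  ∑ i, f2 (Q i) (centers pc Q i)

/-- `OPT(pc)`: the minimum value over all extensions of `pc`. -/
noncomputable def OPT (pc : PartialClustering d Δ k P) : ℝ :=
  sInf (extVal pc '' {Q | IsExtension pc Q})

/-- An optimal extension. -/
def IsOptimalExtension (pc : PartialClustering d Δ k P)
    (Q : Fin k → Finset (HPt d)) : Prop :=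
  IsExtension pc Q ∧ ∀ Q', IsExtension pc Q' → extVal pc Q ≤ extVal pc Q'

/-- A safe extension. -/
def IsSafe (pc : PartialClustering d Δ k P) (Q : Fin k → Finset (HPt d)) : Prop :=
  ∀ x ∈ Rset pc, ∀ i j : Fin k, Dom x ⊆ pc.I i → Dom x ⊆ pc.I j → x ∈ Q i →
    dH x (centers pc Q i) ≤ dH x (centers pc Q j)

/-- `Z` is a `t`-useless set of coordinates for the pair `(i,j)` and extension `Q`.
For pairs with `I i = ∅` or `I j ≠ ∅` it is by definition the empty set. -/
def IsUseless (pc : PartialClustering d Δ k P) (Q : Fin k → Finset (HPt d))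
    (t : ℝ) (i j : Fin k) (Z : Finset (Fin d)) : Prop :=
  Z ⊆ pc.I i ∧
  (((pc.I i).Nonempty ∧ pc.I j = ∅) →
    (Z = ∅ ∨ d - Δ ≤ Z.card) ∧
    f2I Z (Q j ∩ Rset pc) (pc.u i) - f2I Z (Q j ∩ Rset pc) (centers pc Q j)
      ≤ t * OPT pc) ∧
  (¬ ((pc.I i).Nonempty ∧ pc.I j = ∅) → Z = ∅)

/-- `Z` is compatible with the extension `Q` (for the pair `(i,j)`). -/
def Compatible (pc : PartialClustering d Δ k P) (Q : Fin k → Finset (HPt d))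
    (i j : Fin k) (Z : Finset (Fin d)) : Prop :=
  (∀ x ∈ Q j, ¬ Dom x ⊆ pc.I j → ¬ Dom x ⊆ Z) ∧
  (∀ x ∈ Q j, Dom x ⊆ pc.I i → ¬ dH x (pc.u i) < dH x (centers pc Q j) / 2)

open scoped Classical in
/-- The elements of `FD(S, I)` at distance at most `ρ` from `u`. -/
noncomputable def ballFD (S : Finset (HPt d)) (I : Finset (Fin d))
    (u : HPt d) (ρ : ℝ) : Finset (HPt d) :=
  (FD S I).filter fun x => dH x u ≤ ρ


/-!
Write `w e = (u_i - c'_j)_e²` and `ρ = d^j`, so `ρ² = Σ_{e ∈ I_{i,j}} w e`. Since `c'_j` is the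
mean of `P'_j`, the parallel-axis identity in each coordinate bounds the gain
`f^{I_{i,j}}_2(P'_j, u_i) - f^{I_{i,j}}_2(P'_j, c'_j)` by `|P'_j| ρ²`.

If `ρ > 0`, no `x ∈ P'_j` lies in `B_j`: compatibility gives `d(x, c'_j) ≤ 2 d(x, u_i)` and a
coordinate of `Dom x` outside `Z_{i,j}`, whose weight dominates that of `i_{j,min}`. As `x` misses
at most `Δ` coordinates of `I_i`, the coordinates of `I_{i,j}` outside `Dom x` can be matched with
coordinates among `r_1, …, r_Δ` inside `Dom x` of no smaller weight, so
`ρ² ≤ Σ_{Dom x} w ≤ 2 d(x,u_i)² + 2 d(x,c'_j)² ≤ 10 d(x,u_i)² ≤ 10 (ρ/4)²`, a contradiction.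

On the other hand each point of `FD(R'_i, I_i) - B_j` pays at least `(ρ/4)²` in the extension.
Hence if `|P'_j - B_j| < c |FD(R'_i, I_i) - B_j|`, the gain is at most
`c |FD(R'_i, I_i) - B_j| ρ² ≤ 16 c · val ≤ 16 c (1 + t) OPT`.
-/

section Sums

variable {ι : Type*}

theorem sum_le_sum_of_card_le_of_forall_le {w : ι → ℝ} {K J : Finset ι}
    (hJ : ∀ r ∈ J, 0 ≤ w r) (hcard : K.card ≤ J.card) (h : ∀ e ∈ K, ∀ r ∈ J, w e ≤ w r) :
    ∑ e ∈ K, w e ≤ ∑ r ∈ J, w r := by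
  rcases J.eq_empty_or_nonempty with rfl | hJne
  · simp [Finset.card_eq_zero.1 (Nat.le_zero.1 hcard)]
  obtain ⟨r₀, hr₀, hr₀min⟩ := J.exists_min_image w hJne
  calc ∑ e ∈ K, w e ≤ K.card • w r₀ := sum_le_card_nsmul K w _ fun e he => h e he r₀ hr₀
    _ ≤ J.card • w r₀ := nsmul_le_nsmul_left (hJ r₀ hr₀) hcard
    _ ≤ ∑ r ∈ J, w r := card_nsmul_le_sum J w _ hr₀min

theorem card_sdiff_sdiff_le_card_inter [DecidableEq ι] {I R D : Finset ι} (hR : R ⊆ I)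
    (hcard : (I \ D).card ≤ R.card) : ((I \ R) \ D).card ≤ (D ∩ R).card := by
  have hunion : (I \ R) \ D ∪ R \ D ⊆ I \ D := by
    intro e he
    rcases mem_union.1 he with he | he
    · exact mem_sdiff.2 ⟨(mem_sdiff.1 (mem_sdiff.1 he).1).1, (mem_sdiff.1 he).2⟩
    · exact mem_sdiff.2 ⟨hR (mem_sdiff.1 he).1, (mem_sdiff.1 he).2⟩
  have hdisj : Disjoint ((I \ R) \ D) (R \ D) :=
    disjoint_left.2 fun e heK heR => (mem_sdiff.1 (mem_sdiff.1 heK).1).2 (mem_sdiff.1 heR).1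
  have hle := card_le_card hunion
  rw [card_union_of_disjoint hdisj] at hle
  have hsplit : (D ∩ R).card + (R \ D).card = R.card := by
    rw [← card_inter_add_card_sdiff R D, inter_comm]
  omega

theorem sum_sdiff_le_sum_of_card_sdiff_le [DecidableEq ι] {w : ι → ℝ} (hw : ∀ e, 0 ≤ w e)
    {I Z R D : Finset ι} {a b : ι} (hmin : ∀ e ∈ I \ Z, w a ≤ w e) (hR : R ⊆ I)
    (hmax : ∀ r ∈ R, ∀ s ∈ (I \ {a}) \ R, w s ≤ w r) (hD : D ⊆ I) (hb : b ∈ D \ Z)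
    (hcard : (I \ D).card ≤ R.card) :
    ∑ e ∈ I \ R, w e ≤ ∑ e ∈ D, w e := by
  set K := (I \ R) \ D
  set J := D ∩ R
  have hsplit : (I \ R) ∩ D = D \ R := by
    ext e; simp only [mem_inter, mem_sdiff]; constructor
    · rintro ⟨⟨-, heR⟩, heD⟩; exact ⟨heD, heR⟩
    · rintro ⟨heD, heR⟩; exact ⟨⟨hD heD, heR⟩, heD⟩
  suffices hKJ : ∑ e ∈ K, w e ≤ ∑ e ∈ J, w e by
    rw [← sum_inter_add_sum_sdiff (I \ R) D, ← sum_inter_add_sum_sdiff D R, hsplit]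
    linarith
  have hcardKJ : K.card ≤ J.card := card_sdiff_sdiff_le_card_inter hR hcard
  have hK : ∀ e ∈ K, e ≠ a → e ∈ (I \ {a}) \ R := by
    intro e he hea
    simp only [K, mem_sdiff, mem_singleton] at he ⊢
    exact ⟨⟨he.1.1, hea⟩, he.1.2⟩
  have hJR : J ⊆ R := inter_subset_right
  have hab : w a ≤ w b := hmin b (mem_sdiff.2 ⟨hD (mem_sdiff.1 hb).1, (mem_sdiff.1 hb).2⟩)
  -- Every `e ∈ K` other than `a` is dominated by all of `R`; `a` is paired with `b` when `b ∈ R`,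
  -- and otherwise `b` itself is dominated by all of `R`.
  by_cases hexch : a ∈ K ∧ b ∈ R
  · obtain ⟨haK, hbR⟩ := hexch
    have hbJ : b ∈ J := mem_inter.2 ⟨(mem_sdiff.1 hb).1, hbR⟩
    have hrest : ∑ e ∈ K.erase a, w e ≤ ∑ e ∈ J.erase b, w e := by
      refine sum_le_sum_of_card_le_of_forall_le (fun r _ => hw r) ?_ fun e he r hr =>
        hmax r (hJR (mem_of_mem_erase hr)) e (hK e (mem_of_mem_erase he) (ne_of_mem_erase he))
      rw [card_erase_of_mem haK, card_erase_of_mem hbJ]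
      omega
    rw [← add_sum_erase K w haK, ← add_sum_erase J w hbJ]
    exact add_le_add hab hrest
  · refine sum_le_sum_of_card_le_of_forall_le (fun r _ => hw r) hcardKJ fun e he r hr => ?_
    by_cases hea : e = a
    · subst hea
      have hbR : b ∉ R := fun hbR => hexch ⟨he, hbR⟩
      have hba : b ≠ e := fun h => (mem_sdiff.1 he).2 (h ▸ (mem_sdiff.1 hb).1)
      refine hab.trans (hmax r (hJR hr) b ?_)
      simp only [mem_sdiff, mem_singleton]
      exact ⟨⟨hD (mem_sdiff.1 hb).1, hba⟩, hbR⟩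
    · exact hmax r (hJR hr) e (hK e he hea)

theorem sum_sq_sub_sub_sum_sq_sub_mean (T : Finset ι) (g : ι → ℝ) (v : ℝ) :
    ∑ x ∈ T, (g x - v) ^ 2 - ∑ x ∈ T, (g x - (∑ y ∈ T, g y) / T.card) ^ 2
      = T.card * (v - (∑ y ∈ T, g y) / T.card) ^ 2 := by
  rcases T.eq_empty_or_nonempty with rfl | hT
  · simp
  set m := (∑ y ∈ T, g y) / T.card
  have hm : ∑ y ∈ T, g y = T.card * m := by
    have hcard : (T.card : ℝ) ≠ 0 := by exact_mod_cast hT.card_pos.ne'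
    simp only [m]
    field_simp
  rw [← sum_sub_distrib]
  have hexpand : ∀ x ∈ T, (g x - v) ^ 2 - (g x - m) ^ 2 = 2 * (m - v) * g x + (v ^ 2 - m ^ 2) :=
    fun x _ => by ring
  rw [sum_congr rfl hexpand, sum_add_distrib, ← mul_sum, hm, sum_const, nsmul_eq_mul]
  ring

end Sums

section Coordinates

theorem coordSq_nonneg (a b : Option ℝ) : 0 ≤ coordSq a b := by
  cases a <;> cases b <;> simp only [coordSq] <;> positivity

@[simp]
theorem coordSq_none_left (b : Option ℝ) : coordSq none b = 0 := by cases b <;> rfl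

@[simp]
theorem coordSq_none_right (a : Option ℝ) : coordSq a none = 0 := by cases a <;> rfl

@[simp]
theorem coordSq_some_some (a b : ℝ) : coordSq (some a) (some b) = (a - b) ^ 2 := rfl

theorem coordSq_le_two_mul_add {a : Option ℝ} (ha : a ≠ none) (b c : Option ℝ) :
    coordSq b c ≤ 2 * coordSq a b + 2 * coordSq a c := by
  obtain ⟨x, rfl⟩ := Option.ne_none_iff_exists'.1 ha
  cases b with
  | none => simpa using coordSq_nonneg _ c
  | some y =>
    cases c with
    | none => simp only [coordSq_some_some, coordSq_none_right]; positivity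
    | some z => simp only [coordSq_some_some]; nlinarith [sq_nonneg (2 * x - y - z)]

theorem mem_Dom {x : HPt d} {e : Fin d} : e ∈ Dom x ↔ x e ≠ none := by simp [Dom]

theorem notMem_Dom {x : HPt d} {e : Fin d} : e ∉ Dom x ↔ x e = none := by simp [Dom]

theorem card_sdiff_Dom_le_numMissing (I : Finset (Fin d)) (x : HPt d) :
    (I \ Dom x).card ≤ numMissing x :=
  card_le_card fun e he => by simpa using notMem_Dom.1 (mem_sdiff.1 he).2

theorem dI_nonneg (I : Finset (Fin d)) (x y : HPt d) : 0 ≤ dI I x y := Real.sqrt_nonneg _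

theorem dH_nonneg (x y : HPt d) : 0 ≤ dH x y := dI_nonneg _ _ _

theorem dI_sq (I : Finset (Fin d)) (x y : HPt d) :
    dI I x y ^ 2 = ∑ e ∈ I, coordSq (x e) (y e) :=
  Real.sq_sqrt (sum_nonneg fun _ _ => coordSq_nonneg _ _)

theorem dI_singleton_le_dI_singleton_iff {e e' : Fin d} {x y : HPt d} :
    dI {e} x y ≤ dI {e'} x y ↔ coordSq (x e) (y e) ≤ coordSq (x e') (y e') := by
  simp only [dI, sum_singleton]
  exact Real.sqrt_le_sqrt_iff (coordSq_nonneg _ _)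

theorem sum_Dom_coordSq (x y : HPt d) : ∑ e ∈ Dom x, coordSq (x e) (y e) = dH x y ^ 2 := by
  rw [dH, dI_sq]
  exact sum_subset (subset_univ _) fun e _ he => by rw [notMem_Dom.1 he, coordSq_none_left]

theorem dH_congr_right {x y y' : HPt d} (h : ∀ e ∈ Dom x, y e = y' e) : dH x y = dH x y' := by
  have hsq : dH x y ^ 2 = dH x y' ^ 2 := by
    rw [← sum_Dom_coordSq, ← sum_Dom_coordSq]
    exact sum_congr rfl fun e he => by rw [h e he]
  exact (pow_left_inj₀ (dI_nonneg _ _ _) (dI_nonneg _ _ _) two_ne_zero).1 hsq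

theorem sum_Dom_coordSq_le (x u c : HPt d) :
    ∑ e ∈ Dom x, coordSq (u e) (c e) ≤ 2 * dH x u ^ 2 + 2 * dH x c ^ 2 := by
  rw [← sum_Dom_coordSq, ← sum_Dom_coordSq, mul_sum, mul_sum, ← sum_add_distrib]
  exact sum_le_sum fun e he => coordSq_le_two_mul_add (mem_Dom.1 he) _ _

end Coordinates

section Mean

theorem mem_PD_singleton {S : Finset (HPt d)} {e : Fin d} {x : HPt d} :
    x ∈ PD S {e} ↔ x ∈ S ∧ x e ≠ none := by
  simp [PD, Finset.Nonempty, mem_Dom]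

theorem cP_apply (S : Finset (HPt d)) (e : Fin d) :
    cP S e = if (PD S {e}).Nonempty then
      some ((∑ x ∈ PD S {e}, (x e).getD 0) / (PD S {e}).card) else none := by
  simp [cP, cI]

/-- The parallel-axis identity in one coordinate: only the points defined there contribute. -/
theorem sum_coordSq_sub_sum_coordSq_cP (S : Finset (HPt d)) (e : Fin d) (v : ℝ) :
    ∑ x ∈ S, coordSq (x e) (some v) - ∑ x ∈ S, coordSq (x e) (cP S e)
      = (PD S {e}).card * coordSq (some v) (cP S e) := by
  have hrestr : ∀ y, ∑ x ∈ S, coordSq (x e) y = ∑ x ∈ PD S {e}, coordSq (x e) y := fun y =>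
    (sum_subset (filter_subset _ _) fun x hxS hx => by
      rw [of_not_not fun hne => hx (mem_PD_singleton.2 ⟨hxS, hne⟩), coordSq_none_left]).symm
  rw [hrestr, hrestr, cP_apply]
  split_ifs with hT
  · have hget : ∀ x ∈ PD S {e}, ∀ w : ℝ, coordSq (x e) (some w) = ((x e).getD 0 - w) ^ 2 := by
      intro x hx w
      obtain ⟨a, ha⟩ := Option.ne_none_iff_exists'.1 (mem_PD_singleton.1 hx).2
      rw [ha]; rfl
    rw [sum_congr rfl fun x hx => hget x hx v, sum_congr rfl fun x hx => hget x hx _,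
      coordSq_some_some, sum_sq_sub_sub_sum_sq_sub_mean]
  · simp [not_nonempty_iff_eq_empty.1 hT]

theorem f2I_sub_f2I_cP (S : Finset (HPt d)) {I : Finset (Fin d)} {u : HPt d}
    (hu : ∀ e ∈ I, u e ≠ none) :
    f2I I S u - f2I I S (cP S) = ∑ e ∈ I, (PD S {e}).card * coordSq (u e) (cP S e) := by
  have hswap : ∀ y, f2I I S y = ∑ e ∈ I, ∑ x ∈ S, coordSq (x e) (y e) := fun y => by
    simp only [f2I, dI_sq]
    exact sum_comm
  rw [hswap, hswap, ← sum_sub_distrib]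
  refine sum_congr rfl fun e he => ?_
  obtain ⟨v, hv⟩ := Option.ne_none_iff_exists'.1 (hu e he)
  rw [hv]
  exact sum_coordSq_sub_sum_coordSq_cP S e v

theorem f2I_sub_f2I_cP_le (S : Finset (HPt d)) {I : Finset (Fin d)} {u : HPt d}
    (hu : ∀ e ∈ I, u e ≠ none) :
    f2I I S u - f2I I S (cP S) ≤ S.card * dI I u (cP S) ^ 2 := by
  rw [f2I_sub_f2I_cP S hu, dI_sq, mul_sum]
  exact sum_le_sum fun e _ => mul_le_mul_of_nonneg_right
    (by exact_mod_cast card_le_card (filter_subset _ _)) (coordSq_nonneg _ _)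

end Mean

/-- With `w e = (u e - c e)²`: `ρ² = Σ_{I \ R} w ≤ Σ_{Dom x} w ≤ 2 d(x,u)² + 2 d(x,c)² ≤ 10 (ρ/4)²`. -/
theorem dI_sdiff_eq_zero_of_dH_le {I Z R : Finset (Fin d)} {a b : Fin d} {x u c : HPt d}
    (hmin : ∀ e ∈ I \ Z, dI {a} u c ≤ dI {e} u c) (hR : R ⊆ I)
    (hmax : ∀ r ∈ R, ∀ s ∈ (I \ {a}) \ R, dI {s} u c ≤ dI {r} u c)
    (hxI : Dom x ⊆ I) (hb : b ∈ Dom x \ Z) (hx : numMissing x ≤ R.card)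
    (hxc : dH x c ≤ 2 * dH x u) (hxu : dH x u ≤ dI (I \ R) u c / 4) :
    dI (I \ R) u c = 0 := by
  have hsum := sum_sdiff_le_sum_of_card_sdiff_le (w := fun e => coordSq (u e) (c e))
    (fun _ => coordSq_nonneg _ _) (fun e he => dI_singleton_le_dI_singleton_iff.1 (hmin e he))
    hR (fun r hr s hs => dI_singleton_le_dI_singleton_iff.1 (hmax r hr s hs)) hxI hb
    ((card_sdiff_Dom_le_numMissing I x).trans hx)
  have hρ : dI (I \ R) u c ^ 2 ≤ 2 * dH x u ^ 2 + 2 * dH x c ^ 2 := by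
    rw [dI_sq]
    exact hsum.trans (sum_Dom_coordSq_le x u c)
  have hc2 := pow_le_pow_left₀ (dH_nonneg x c) hxc 2
  have hu2 := pow_le_pow_left₀ (dH_nonneg x u) hxu 2
  exact pow_eq_zero_iff two_ne_zero |>.1 (le_antisymm (by nlinarith) (sq_nonneg _))

section Clustering

variable {pc : PartialClustering d Δ k P} {Q : Fin k → Finset (HPt d)} {i j : Fin k}

theorem centers_eq_cP_of_I_eq_empty (h : pc.I j = ∅) : centers pc Q j = cP (Q j) := by
  funext r
  simp [centers, h]

theorem dH_centers_of_Dom_subset {x : HPt d} (h : Dom x ⊆ pc.I i) :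
    dH x (centers pc Q i) = dH x (pc.u i) :=
  dH_congr_right fun _ he => if_pos (h he)

theorem f2_le_extVal (pc : PartialClustering d Δ k P) (Q : Fin k → Finset (HPt d)) (i : Fin k) :
    f2 (Q i) (centers pc Q i) ≤ extVal pc Q :=
  single_le_sum (f := fun i => f2 (Q i) (centers pc Q i))
    (fun _ _ => sum_nonneg fun _ _ => sq_nonneg _) (mem_univ i)

theorem card_mul_sq_le_extVal {S : Finset (HPt d)} (hS : S ⊆ Q i) {ρ : ℝ} (hρ : 0 ≤ ρ)
    (h : ∀ y ∈ S, Dom y ⊆ pc.I i ∧ ρ ≤ dH y (pc.u i)) :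
    S.card * ρ ^ 2 ≤ extVal pc Q :=
  calc S.card * ρ ^ 2 = ∑ _y ∈ S, ρ ^ 2 := by rw [sum_const, nsmul_eq_mul]
    _ ≤ ∑ y ∈ S, dH y (centers pc Q i) ^ 2 := sum_le_sum fun y hy => by
      rw [dH_centers_of_Dom_subset (h y hy).1]
      exact pow_le_pow_left₀ hρ (h y hy).2 2
    _ ≤ f2 (Q i) (centers pc Q i) := sum_le_sum_of_subset_of_nonneg hS fun _ _ _ => sq_nonneg _
    _ ≤ extVal pc Q := f2_le_extVal pc Q i

theorem card_FD_sdiff_ballFD_mul_sq_le_extVal {ρ : ℝ} (hρ : 0 ≤ ρ) :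
    ((FD (Q i ∩ Rset pc) (pc.I i) \ ballFD (Rset pc) (pc.I i) (pc.u i) ρ).card : ℝ) * ρ ^ 2
      ≤ extVal pc Q := by
  refine card_mul_sq_le_extVal (i := i) (fun y hy => ?_) hρ fun y hy => ?_
  · exact (mem_inter.1 (mem_filter.1 (mem_sdiff.1 hy).1).1).1
  · obtain ⟨hyFD, hyB⟩ := mem_sdiff.1 hy
    obtain ⟨hyQR, hyI⟩ := mem_filter.1 hyFD
    exact ⟨hyI, le_of_not_ge fun hle =>
      hyB (mem_filter.2 ⟨mem_filter.2 ⟨(mem_inter.1 hyQR).2, hyI⟩, hle⟩)⟩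

theorem Compatible.disjoint_ballFD {Z Rs : Finset (Fin d)} {imin : Fin d}
    (hcompat : Compatible pc Q i j Z) (hIj : pc.I j = ∅)
    (hP : ∀ y ∈ P, IsDeltaPt Δ y ∧ (Dom y).Nonempty) (hQ : IsExtension pc Q)
    (hmin : ∀ e ∈ pc.I i \ Z,
      dI {imin} (pc.u i) (centers pc Q j) ≤ dI {e} (pc.u i) (centers pc Q j))
    (hR : Rs ⊆ pc.I i) (hRcard : Rs.card = Δ)
    (hmax : ∀ r ∈ Rs, ∀ s ∈ (pc.I i \ {imin}) \ Rs,
      dI {s} (pc.u i) (centers pc Q j) ≤ dI {r} (pc.u i) (centers pc Q j))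
    (hρ : dI (pc.I i \ Rs) (pc.u i) (centers pc Q j) ≠ 0) :
    Disjoint (Q j)
      (ballFD (Rset pc) (pc.I i) (pc.u i) (dI (pc.I i \ Rs) (pc.u i) (centers pc Q j) / 4)) := by
  refine disjoint_left.2 fun x hxQ hxB => hρ ?_
  obtain ⟨hxΔ, hxne⟩ := hP x (hQ.2.1 j hxQ)
  obtain ⟨hxFD, hxu⟩ := mem_filter.1 hxB
  have hxI : Dom x ⊆ pc.I i := (mem_filter.1 hxFD).2
  have hxj : ¬ Dom x ⊆ pc.I j := by
    rw [hIj]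
    exact fun h => hxne.ne_empty (subset_empty.1 h)
  obtain ⟨b, hbx, hbZ⟩ := not_subset.1 (hcompat.1 x hxQ hxj)
  have hxc := not_lt.1 (hcompat.2 x hxQ hxI)
  exact dI_sdiff_eq_zero_of_dH_le hmin hR hmax hxI (mem_sdiff.2 ⟨hbx, hbZ⟩) (hRcard ▸ hxΔ)
    (by linarith) hxu

end Clustering

theorem stmt_13_general {d Δ k : ℕ}
    {P : Finset (HPt d)} (hP : ∀ y ∈ P, IsDeltaPt Δ y ∧ (Dom y).Nonempty)
    (pc : PartialClustering d Δ k P)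
    (t : ℝ)
    (Q : Fin k → Finset (HPt d)) (hQ : IsExtension pc Q)
    (hval : extVal pc Q ≤ (1 + t) * OPT pc)
    (i j : Fin k) (hIj : pc.I j = ∅)
    (Z : Finset (Fin d))
    (hcompat : Compatible pc Q i j Z)
    (imin : Fin d)
    (hminProp : ∀ e ∈ pc.I i \ Z,
      dI {imin} (pc.u i) (centers pc Q j) ≤ dI {e} (pc.u i) (centers pc Q j))
    (Rs : Finset (Fin d)) (hRsub : Rs ⊆ pc.I i \ {imin}) (hRcard : Rs.card = Δ)
    (hRmax : ∀ r ∈ Rs, ∀ s ∈ (pc.I i \ {imin}) \ Rs,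
      dI {s} (pc.u i) (centers pc Q j) ≤ dI {r} (pc.u i) (centers pc Q j))
    (dj : ℝ) (hdj : dj = dI (pc.I i \ Rs) (pc.u i) (centers pc Q j))
    (c : ℝ) (hc : 0 < c)
    (B : Finset (HPt d)) (hB : B = ballFD (Rset pc) (pc.I i) (pc.u i) (dj / 4)) :
    c * ((FD (Q i ∩ Rset pc) (pc.I i) \ B).card : ℝ) ≤ ((Q j \ B).card : ℝ) ∨
      f2I (pc.I i \ Rs) (Q j) (pc.u i) - f2I (pc.I i \ Rs) (Q j) (centers pc Q j)
        ≤ 16 * c * (1 + t) * OPT pc := by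
  refine or_iff_not_imp_left.2 fun hfew => ?_
  replace hfew := not_le.1 hfew
  have hu : ∀ e ∈ pc.I i \ Rs, pc.u i e ≠ none := fun e he =>
    mem_Dom.1 ((pc.dom_u i).symm ▸ (mem_sdiff.1 he).1)
  have hgain := f2I_sub_f2I_cP_le (Q j) hu
  rw [← centers_eq_cP_of_I_eq_empty hIj, ← hdj] at hgain
  have hgainB : f2I (pc.I i \ Rs) (Q j) (pc.u i) - f2I (pc.I i \ Rs) (Q j) (centers pc Q j)
      ≤ (Q j \ B).card * dj ^ 2 := by
    rcases eq_or_ne dj 0 with h0 | h0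
    · simpa [h0] using hgain
    · subst hdj hB
      rwa [sdiff_eq_self_of_disjoint (hcompat.disjoint_ballFD hIj hP hQ hminProp
        (hRsub.trans sdiff_subset) hRcard hRmax h0)]
  have hcost : ((FD (Q i ∩ Rset pc) (pc.I i) \ B).card : ℝ) * (dj / 4) ^ 2 ≤ extVal pc Q :=
    hB ▸ card_FD_sdiff_ballFD_mul_sq_le_extVal (div_nonneg (hdj ▸ dI_nonneg _ _ _) zero_le_four)
  calc _ ≤ (Q j \ B).card * dj ^ 2 := hgainB
    _ ≤ c * (FD (Q i ∩ Rset pc) (pc.I i) \ B).card * dj ^ 2 := by gcongr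
    _ = 16 * c * ((FD (Q i ∩ Rset pc) (pc.I i) \ B).card * (dj / 4) ^ 2) := by ring
    _ ≤ 16 * c * extVal pc Q := by gcongr
    _ ≤ 16 * c * ((1 + t) * OPT pc) := by gcongr
    _ = 16 * c * (1 + t) * OPT pc := by ring

/-- Claim 2 in Lemma 11: either the ball `B_j` leaves many points of
`P'_j`, or the coordinates of `I_{i,j}` are useless. -/
theorem stmt_13 {d Δ k : ℕ} (hd : 1 ≤ d) (hΔ : Δ < d) (hk : 1 ≤ k)
    {P : Finset (HPt d)} (hP : ∀ y ∈ P, IsDeltaPt Δ y ∧ (Dom y).Nonempty)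
    (pc : PartialClustering d Δ k P)
    (t : ℝ) (ht : 0 < t)
    (Q : Fin k → Finset (HPt d)) (hQ : IsExtension pc Q)
    (hval : extVal pc Q ≤ (1 + t) * OPT pc)
    (i j : Fin k) (hIi : Δ + 1 ≤ (pc.I i).card) (hIj : pc.I j = ∅)
    (Z : Finset (Fin d)) (hZsub : Z ⊆ pc.I i) (hZne : Z ≠ pc.I i)
    (hcompat : Compatible pc Q i j Z)
    (imin : Fin d) (himin : imin ∈ pc.I i \ Z)
    (hminProp : ∀ e ∈ pc.I i \ Z,
      dI {imin} (pc.u i) (centers pc Q j) ≤ dI {e} (pc.u i) (centers pc Q j))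
    (Rs : Finset (Fin d)) (hRsub : Rs ⊆ pc.I i \ {imin}) (hRcard : Rs.card = Δ)
    (hRmax : ∀ r ∈ Rs, ∀ s ∈ (pc.I i \ {imin}) \ Rs,
      dI {s} (pc.u i) (centers pc Q j) ≤ dI {r} (pc.u i) (centers pc Q j))
    (dj : ℝ) (hdj : dj = dI (pc.I i \ Rs) (pc.u i) (centers pc Q j))
    (c : ℝ) (hc : 0 < c)
    (B : Finset (HPt d)) (hB : B = ballFD (Rset pc) (pc.I i) (pc.u i) (dj / 4)) :
    c * ((FD (Q i ∩ Rset pc) (pc.I i) \ B).card : ℝ) ≤ ((Q j \ B).card : ℝ) ∨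
      f2I (pc.I i \ Rs) (Q j) (pc.u i) - f2I (pc.I i \ Rs) (Q j) (centers pc Q j)
        ≤ 16 * c * (1 + t) * OPT pc :=
  stmt_13_general hP pc t Q hQ hval i j hIj Z hcompat imin hminProp Rs hRsub hRcard hRmax dj hdj c
    hc B hB

end KMD
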